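/- Let θ be an algebraic integer with minimal polynomial f ∈ ℤ[t], let R = ℤ[θ], let 𝒫 be a maximal ideal of R, and let p be the rational prime with 𝒫 ∩ ℤ = pℤ. Let μ_𝒫 ∈ ℤ[t] be a monic polynomial of least degree such that μ_𝒫(θ) ∈ 𝒫, and let M = (p, μ_𝒫(t)) be the corresponding ideal of ℤ[t]. Then the localization R_𝒫 is a discrete valuation ring if and only if f ∉ M². -/

import Mathlib

/-!
Evaluation at `θ` identifies `ℤ[θ]` with `ℤ[t]/(f)`, and the minimality of `μ` forces `𝓟` to pull
back to `M = (p, μ)`, so the maximal ideal of `R_𝓟` is generated by `p` and `μ(θ)`. Writing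
`f = u p + v μ`, if `f ∉ M²` then `u` or `v` lies outside `M`, hence is a unit in `R_𝓟`, and one
generator is redundant. Conversely `p, μ` is a regular sequence in `ℤ[t]`, so `M/M²` is free on
`p` and `μ`; in the valuation ring `R_𝓟` one of `p`, `μ(θ)` divides the other, and clearing
denominators gives a relation modulo `(f) ⊆ M²` with a coefficient outside `M`, which is absurd.
-/

open Polynomial IsLocalRing

section RegularPair

variable {S : Type*} [CommRing S] {a b : S}

lemma exists_eq_mul_add_mul_sq_of_mem_span_pair_sq {f : S} (hf : f ∈ Ideal.span {a, b} ^ 2) :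
    ∃ α ∈ Ideal.span {a, b}, ∃ β, f = a * α + β * b ^ 2 := by
  have hle : Ideal.span {a, b} ^ 2 ≤ Ideal.span {a} * Ideal.span {a, b} ⊔ Ideal.span {b ^ 2} := by
    rw [pow_two, Ideal.span_pair_mul_span_pair, Ideal.span_le]
    have hmul : ∀ x ∈ Ideal.span {a, b}, a * x ∈ Ideal.span {a} * Ideal.span {a, b} :=
      fun x hx ↦ Ideal.mul_mem_mul (Ideal.mem_span_singleton_self a) hx
    have ha : a ∈ Ideal.span {a, b} := Ideal.subset_span (Set.mem_insert a _)
    have hb : b ∈ Ideal.span {a, b} := Ideal.subset_span (Set.mem_insert_of_mem a rfl)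
    simp only [Set.insert_subset_iff, Set.singleton_subset_iff, SetLike.mem_coe]
    refine ⟨Ideal.mem_sup_left (hmul a ha), Ideal.mem_sup_left (hmul b hb),
      mul_comm a b ▸ Ideal.mem_sup_left (hmul b hb),
      Ideal.mem_sup_right (pow_two b ▸ Ideal.mem_span_singleton_self _)⟩
  obtain ⟨x, hx, y, hy, rfl⟩ := Submodule.mem_sup.mp (hle hf)
  obtain ⟨α, hα, rfl⟩ := Ideal.mem_span_singleton_mul.mp hx
  obtain ⟨β, rfl⟩ := Ideal.mem_span_singleton'.mp hy
  exact ⟨α, hα, β, rfl⟩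

lemma mem_span_pair_of_mul_add_mul_mem_sq (ha : IsLeftRegular a) (hab : ∀ x, a ∣ b * x → a ∣ x)
    {x y : S} (h : a * x + b * y ∈ Ideal.span {a, b} ^ 2) :
    x ∈ Ideal.span {a, b} ∧ y ∈ Ideal.span {a, b} := by
  obtain ⟨α, hα, β, hαβ⟩ := exists_eq_mul_add_mul_sq_of_mem_span_pair_sq h
  obtain ⟨δ, hδ⟩ := hab (y - β * b) ⟨α - x, by linear_combination hαβ⟩
  have hx : x = α - b * δ := by
    have : a * (b * δ) = a * (α - x) := by linear_combination hαβ - b * hδ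
    linear_combination ha this
  refine ⟨hx ▸ sub_mem hα (Ideal.mul_mem_right _ _ (Ideal.subset_span (by simp))),
    Ideal.mem_span_pair.mpr ⟨δ, β, by linear_combination -hδ⟩⟩

end RegularPair

lemma Ideal.span_pair_eq_span_singleton_of_isUnit {T : Type*} [CommRing T] {x y u v : T}
    (hu : IsUnit u) (h : u * x + v * y = 0) : Ideal.span {x, y} = Ideal.span {y} := by
  refine Submodule.span_insert_eq_span (Ideal.mem_span_singleton'.mpr ⟨-(↑hu.unit⁻¹ * v), ?_⟩)
  linear_combination (-(↑hu.unit⁻¹ : T)) * h + x * hu.val_inv_mul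

lemma IsLocalization.AtPrime.exists_mul_eq_mul_of_dvd {R : Type*} [CommRing R] {P : Ideal R}
    [P.IsPrime] {x y : R}
    (h : algebraMap R (Localization.AtPrime P) x ∣ algebraMap R (Localization.AtPrime P) y) :
    ∃ r, ∃ s ∉ P, x * r = y * s := by
  obtain ⟨d, hd⟩ := h
  obtain ⟨⟨r, s⟩, rfl⟩ := IsLocalization.mk'_surjective P.primeCompl d
  have hrs : algebraMap R (Localization.AtPrime P) (x * r) =
      algebraMap R (Localization.AtPrime P) (y * s) := by
    rw [map_mul, map_mul, hd, ← IsLocalization.mk'_spec (Localization.AtPrime P) r s]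
    ring
  obtain ⟨t, ht⟩ := IsLocalization.exists_of_eq (M := P.primeCompl) hrs
  exact ⟨t * r, t * s, (P.primeCompl).mul_mem t.2 s.2, by linear_combination ht⟩

section Localization

variable {S R : Type*} [CommRing S] [CommRing R] {φ : S →+* R} {P : Ideal R} [P.IsPrime]
  {a b : S}

lemma maximalIdeal_atPrime_eq_span_pair (hφ : Function.Surjective φ)
    (hP : P.comap φ = Ideal.span {a, b}) :
    maximalIdeal (Localization.AtPrime P) = Ideal.span
      {algebraMap R (Localization.AtPrime P) (φ a),
        algebraMap R (Localization.AtPrime P) (φ b)} := by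
  calc maximalIdeal (Localization.AtPrime P)
      = P.map (algebraMap R (Localization.AtPrime P)) :=
        Localization.AtPrime.map_eq_maximalIdeal.symm
    _ = ((Ideal.span {a, b}).map φ).map (algebraMap R (Localization.AtPrime P)) := by
      rw [← hP, Ideal.map_comap_of_surjective φ hφ P]
    _ = _ := by rw [Ideal.map_span, Ideal.map_span, Set.image_pair, Set.image_pair]

lemma isPrincipal_maximalIdeal_atPrime_of_not_ker_le_sq (hφ : Function.Surjective φ)
    (hP : P.comap φ = Ideal.span {a, b}) (hker : ¬ RingHom.ker φ ≤ Ideal.span {a, b} ^ 2) :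
    (maximalIdeal (Localization.AtPrime P)).IsPrincipal := by
  rw [maximalIdeal_atPrime_eq_span_pair hφ hP]
  set ι := algebraMap R (Localization.AtPrime P)
  obtain ⟨f, hf, hfM⟩ := SetLike.not_le_iff_exists.mp hker
  obtain ⟨u, v, rfl⟩ := Ideal.mem_span_pair.mp (hP ▸ Ideal.ker_le_comap φ hf)
  have hunit : ∀ w ∉ Ideal.span {a, b}, IsUnit (ι (φ w)) := fun w hw ↦
    IsLocalization.map_units _ (⟨φ w, by rwa [← hP] at hw⟩ : P.primeCompl)
  have hrel : ι (φ u) * ι (φ a) + ι (φ v) * ι (φ b) = 0 := by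
    simpa only [map_add, map_mul, map_zero] using congrArg ι (RingHom.mem_ker.mp hf)
  by_cases hu : u ∈ Ideal.span {a, b}
  · have hv : v ∉ Ideal.span {a, b} := fun hv ↦ hfM <| pow_two (Ideal.span {a, b}) ▸
      add_mem (Ideal.mul_mem_mul hu (Ideal.subset_span (Set.mem_insert a _)))
        (Ideal.mul_mem_mul hv (Ideal.subset_span (Set.mem_insert_of_mem a rfl)))
    rw [Set.pair_comm, Ideal.span_pair_eq_span_singleton_of_isUnit (hunit v hv)
      (v := ι (φ u)) (by linear_combination hrel)]
    exact ⟨_, rfl⟩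
  · rw [Ideal.span_pair_eq_span_singleton_of_isUnit (hunit u hu) hrel]
    exact ⟨_, rfl⟩

lemma not_ker_le_sq_of_valuationRing [IsDomain (Localization.AtPrime P)]
    [ValuationRing (Localization.AtPrime P)] (hφ : Function.Surjective φ)
    (hP : P.comap φ = Ideal.span {a, b}) (ha : IsLeftRegular a) (hab : ∀ x, a ∣ b * x → a ∣ x) :
    ¬ RingHom.ker φ ≤ Ideal.span {a, b} ^ 2 := by
  intro hker
  have hlift : ∀ x y : S, algebraMap R (Localization.AtPrime P) (φ x) ∣
      algebraMap R (Localization.AtPrime P) (φ y) →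
      ∃ γ, ∃ σ ∉ Ideal.span {a, b}, x * γ - y * σ ∈ Ideal.span {a, b} ^ 2 := by
    intro x y hxy
    obtain ⟨r, s, hs, hrs⟩ := IsLocalization.AtPrime.exists_mul_eq_mul_of_dvd hxy
    obtain ⟨γ, rfl⟩ := hφ r
    obtain ⟨σ, rfl⟩ := hφ s
    refine ⟨γ, σ, fun hσ ↦ hs (by rwa [← hP] at hσ), hker ?_⟩
    rw [RingHom.mem_ker, map_sub, map_mul, map_mul, hrs, sub_self]
  rcases ValuationRing.cond (algebraMap R (Localization.AtPrime P) (φ a))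
    (algebraMap R (Localization.AtPrime P) (φ b)) with ⟨c, hc | hc⟩
  · obtain ⟨γ, σ, hσ, hmem⟩ := hlift a b ⟨c, hc.symm⟩
    refine hσ (neg_mem_iff.mp (mem_span_pair_of_mul_add_mul_mem_sq ha hab (x := γ) ?_).2)
    convert hmem using 1; ring
  · obtain ⟨γ, σ, hσ, hmem⟩ := hlift b a ⟨c, hc.symm⟩
    refine hσ (neg_mem_iff.mp (mem_span_pair_of_mul_add_mul_mem_sq ha hab (y := γ) ?_).1)
    convert hmem using 1; ring

theorem isDiscreteValuationRing_atPrime_iff_not_ker_le_sq [IsNoetherianRing S] [IsDomain R]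
    (hφ : Function.Surjective φ) (hP0 : P ≠ ⊥) (hP : P.comap φ = Ideal.span {a, b})
    (ha : IsLeftRegular a) (hab : ∀ x, a ∣ b * x → a ∣ x) :
    IsDiscreteValuationRing (Localization.AtPrime P) ↔
      ¬ RingHom.ker φ ≤ Ideal.span {a, b} ^ 2 := by
  have : IsNoetherianRing R := isNoetherianRing_of_surjective S R φ hφ
  have hnf : ¬ IsField (Localization.AtPrime P) := by
    rwa [isField_iff_maximalIdeal_eq, ← Localization.AtPrime.map_eq_maximalIdeal,
      Ideal.map_eq_bot_iff_of_injective
        (IsLocalization.injective _ P.primeCompl_le_nonZeroDivisors)]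
  have tfae := IsDiscreteValuationRing.TFAE (Localization.AtPrime P) hnf
  refine ⟨fun h ↦ ?_, fun h ↦ ?_⟩
  · have : ValuationRing (Localization.AtPrime P) := (tfae.out 0 1).mp h
    exact not_ker_le_sq_of_valuationRing hφ hP ha hab
  · exact (tfae.out 0 4).mpr (isPrincipal_maximalIdeal_atPrime_of_not_ker_le_sq hφ hP h)

end Localization

namespace Polynomial

lemma C_dvd_iff_map_zmod_eq_zero (n : ℕ) (r : ℤ[X]) :
    C (n : ℤ) ∣ r ↔ r.map (Int.castRingHom (ZMod n)) = 0 := by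
  rw [C_dvd_iff_dvd_coeff, Polynomial.ext_iff]
  simp only [coeff_map, coeff_zero, eq_intCast, ZMod.intCast_zmod_eq_zero_iff_dvd]

lemma Monic.C_dvd_of_C_dvd_mul {R : Type*} [CommRing R] {r : R} {μ x : R[X]} (hμ : μ.Monic)
    (hr : Prime r) (h : C r ∣ μ * x) : C r ∣ x :=
  ((prime_C_iff.mpr hr).dvd_or_dvd h).resolve_left
    fun hrμ ↦ hr.not_isUnit (hμ.C_dvd_iff_isUnit.mp hrμ)

lemma exists_monic_degree_le_C_dvd_sub_C_mul {p : ℕ} [Fact p.Prime] {r : ℤ[X]}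
    (hr : ¬ C (p : ℤ) ∣ r) :
    ∃ s c, s.Monic ∧ s.degree ≤ r.degree ∧ C (p : ℤ) ∣ s - C c * r := by
  set rbar := r.map (Int.castRingHom (ZMod p))
  have hrbar : rbar ≠ 0 := fun h ↦ hr ((C_dvd_iff_map_zmod_eq_zero p r).mpr h)
  obtain ⟨s, hs, hsdeg, hsmonic⟩ := lifts_and_degree_eq_and_monic
    (map_surjective (Int.castRingHom (ZMod p)) ZMod.intCast_surjective
      (rbar * C rbar.leadingCoeff⁻¹))
    (monic_mul_leadingCoeff_inv hrbar)
  obtain ⟨c, hc⟩ := ZMod.intCast_surjective rbar.leadingCoeff⁻¹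
  refine ⟨s, c, hsmonic, ?_, ?_⟩
  · rw [hsdeg, degree_mul_leadingCoeff_inv _ hrbar]
    exact degree_map_le
  · rw [C_dvd_iff_map_zmod_eq_zero, Polynomial.map_sub, Polynomial.map_mul, hs, map_C,
      eq_intCast, hc, mul_comm, sub_self]

end Polynomial

lemma Ideal.eq_span_C_monic_of_degree_le {p : ℕ} [Fact p.Prime] {I : Ideal ℤ[X]} {μ : ℤ[X]}
    (hpI : C (p : ℤ) ∈ I) (hμ : μ.Monic) (hμI : μ ∈ I)
    (hmin : ∀ q : ℤ[X], q.Monic → q ∈ I → μ.degree ≤ q.degree) :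
    I = Ideal.span {C (p : ℤ), μ} := by
  refine le_antisymm (fun g hg ↦ ?_) (Ideal.span_le.mpr (Set.pair_subset hpI hμI))
  have hdiv := modByMonic_add_div g μ
  have hrI : g %ₘ μ ∈ I := by
    rw [← add_sub_cancel_right (g %ₘ μ) (μ * (g /ₘ μ)), hdiv]
    exact sub_mem hg (I.mul_mem_right _ hμI)
  obtain ⟨w, hw⟩ : C (p : ℤ) ∣ g %ₘ μ := by
    -- otherwise a monic polynomial congruent mod `p` to a multiple of `g %ₘ μ` undercuts `μ`
    by_contra hr
    obtain ⟨s, c, hs, hsdeg, hsr⟩ := exists_monic_degree_le_C_dvd_sub_C_mul hr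
    have hsI : s ∈ I := by
      rw [← sub_add_cancel s (C c * (g %ₘ μ))]
      exact add_mem (I.mem_of_dvd hsr hpI) (I.mul_mem_left _ hrI)
    exact (hmin s hs hsI).not_gt (hsdeg.trans_lt (degree_modByMonic_lt g hμ))
  exact Ideal.mem_span_pair.mpr ⟨w, g /ₘ μ, by linear_combination hdiv - hw⟩

lemma Algebra.aeval_adjoin_singleton_surjective {R A : Type*} [CommRing R] [CommRing A]
    [Algebra R A] (x : A) :
    Function.Surjective
      (aeval (R := R) (⟨x, Algebra.self_mem_adjoin_singleton R x⟩ : Algebra.adjoin R {x})) := by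
  intro y
  obtain ⟨g, hg⟩ : (y : A) ∈ (aeval x : R[X] →ₐ[R] A).range :=
    Algebra.adjoin_singleton_eq_range_aeval R x ▸ y.2
  exact ⟨g, Subtype.ext (by rw [aeval_subalgebra_coe]; exact hg)⟩

/-- Let `θ` be an algebraic integer with minimal polynomial `f`, `R = ℤ[θ]`, `𝓟` a maximal
ideal of `R` lying over the rational prime `p`, `μ_𝓟` a monic integer polynomial of least
degree with `μ_𝓟(θ) ∈ 𝓟`, and `M = (p, μ_𝓟(t)) ⊆ ℤ[t]`.  The localization `R_𝓟` is a
discrete valuation ring if and only if `f ∉ M²`. -/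
theorem dvr_iff_not_mem_M_sq
    (θ : ℂ) (hθ : IsIntegral ℤ θ)
    (𝓟 : Ideal (Algebra.adjoin ℤ {θ})) [𝓟.IsMaximal]
    (p : ℕ) [Fact p.Prime]
    (h𝓟p : 𝓟.comap (algebraMap ℤ (Algebra.adjoin ℤ {θ})) = Ideal.span {(p : ℤ)})
    (μ : ℤ[X]) (hμmonic : μ.Monic)
    (hμ𝓟 : aeval (⟨θ, Algebra.self_mem_adjoin_singleton ℤ θ⟩ : Algebra.adjoin ℤ {θ}) μ ∈ 𝓟)
    (hμmin : ∀ q : ℤ[X], q.Monic →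
      aeval (⟨θ, Algebra.self_mem_adjoin_singleton ℤ θ⟩ : Algebra.adjoin ℤ {θ}) q ∈ 𝓟 →
      μ.degree ≤ q.degree) :
    IsDiscreteValuationRing (Localization.AtPrime 𝓟) ↔
      minpoly ℤ θ ∉ (Ideal.span {Polynomial.C (p : ℤ), μ}) ^ 2 := by
  set θ' : Algebra.adjoin ℤ {θ} := ⟨θ, Algebra.self_mem_adjoin_singleton ℤ θ⟩
  set φ : ℤ[X] →+* Algebra.adjoin ℤ {θ} := (aeval θ').toRingHom
  have hφ : Function.Surjective φ := Algebra.aeval_adjoin_singleton_surjective θ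
  have hpP : algebraMap ℤ _ (p : ℤ) ∈ 𝓟 := by
    rw [← Ideal.mem_comap, h𝓟p]
    exact Ideal.mem_span_singleton_self _
  have hcomap : 𝓟.comap φ = Ideal.span {C (p : ℤ), μ} :=
    Ideal.eq_span_C_monic_of_degree_le (by simpa [φ] using hpP) hμmonic hμ𝓟 hμmin
  have hker : RingHom.ker φ = Ideal.span {minpoly ℤ θ} := by
    have hinj : Function.Injective (algebraMap (Algebra.adjoin ℤ {θ}) ℂ) := Subtype.val_injective
    rw [minpoly.ker_eval ((isIntegral_algebraMap_iff hinj).mp hθ), ← minpoly.algebraMap_eq hinj]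
    rfl
  have hP0 : 𝓟 ≠ ⊥ := fun h ↦ by simp [h, Nat.Prime.ne_zero Fact.out] at hpP
  rw [isDiscreteValuationRing_atPrime_iff_not_ker_le_sq hφ hP0 hcomap
    (IsRegular.of_ne_zero (by simpa using (Fact.out : p.Prime).ne_zero)).left
    (fun x ↦ hμmonic.C_dvd_of_C_dvd_mul (Nat.prime_iff_prime_int.mp Fact.out)),
    hker, Ideal.span_singleton_le_iff_mem]
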